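/- Let f, g ∈ Homeo⁺(S¹) have rational rotation numbers and suppose Per(f) ∩ Per(g) = ∅. Then there exist ℓ ≥ 1 and integers n_1, m_1, …, n_ℓ, m_ℓ such that τ(f^{n_1 q(f)}, g^{m_1 q(g)}, …, f^{n_ℓ q(f)}, g^{m_ℓ q(g)}) ≥ 1, where τ(f_1,…,f_n) = rot̃(f̃_n∘⋯∘f̃_1) − Σ_i rot̃(f̃_i). -/
import Mathlib


open Set Function Filter MeasureTheory

/-- An orientation-preserving homeomorphism of `ℝ` commuting with `x ↦ x + 1`,
i.e. a lift of an orientation-preserving circle homeomorphism. -/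
structure HomeoZR : Type where
  toFun : ℝ → ℝ
  invFun : ℝ → ℝ
  left_inv : Function.LeftInverse invFun toFun
  right_inv : Function.RightInverse invFun toFun
  strictMono : StrictMono toFun
  map_add_one : ∀ x, toFun (x + 1) = toFun x + 1

namespace HomeoZR

/-- The identity. -/
protected def id : HomeoZR :=
  ⟨_root_.id, _root_.id, fun _ => rfl, fun _ => rfl, strictMono_id, fun _ => rfl⟩

/-- Composition `f ∘ g`. -/
protected def comp (f g : HomeoZR) : HomeoZR where
  toFun := f.toFun ∘ g.toFun
  invFun := g.invFun ∘ f.invFun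
  left_inv := fun x => by
    show g.invFun (f.invFun (f.toFun (g.toFun x))) = x
    rw [f.left_inv, g.left_inv]
  right_inv := fun x => by
    show f.toFun (g.toFun (g.invFun (f.invFun x))) = x
    rw [g.right_inv, f.right_inv]
  strictMono := f.strictMono.comp g.strictMono
  map_add_one := fun x => by
    show f.toFun (g.toFun (x + 1)) = f.toFun (g.toFun x) + 1
    rw [g.map_add_one, f.map_add_one]

/-- Inverse. -/
protected def symm (f : HomeoZR) : HomeoZR where
  toFun := f.invFun
  invFun := f.toFun
  left_inv := f.right_inv
  right_inv := f.left_inv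
  strictMono := by
    intro x y hxy
    rcases lt_trichotomy (f.invFun x) (f.invFun y) with h | h | h
    · exact h
    · exact absurd (by rw [← f.right_inv x, ← f.right_inv y, h]) (ne_of_lt hxy)
    · have h2 := f.strictMono h
      rw [f.right_inv, f.right_inv] at h2
      exact absurd h2 (lt_asymm hxy)
  map_add_one := fun x => by
    have h1 : f.invFun (f.toFun (f.invFun x + 1)) = f.invFun (x + 1) := by
      rw [f.map_add_one, f.right_inv]
    rw [f.left_inv] at h1
    exact h1.symm

/-- The associated monotone degree-one lift. -/
def toLift (f : HomeoZR) : CircleDeg1Lift :=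
  ⟨⟨f.toFun, f.strictMono.monotone⟩, f.map_add_one⟩

/-- The translation number `rot̃(f)`. -/
noncomputable def transNum (f : HomeoZR) : ℝ :=
  f.toLift.translationNumber

/-- The canonical lift of the underlying circle homeomorphism: the lift whose
translation number lies in `[0,1)`, as a plain function. -/
noncomputable def canon (f : HomeoZR) : ℝ → ℝ :=
  fun x => f.toFun x - (⌊f.transNum⌋ : ℝ)

/-- The periodic points of the underlying circle homeomorphism, as a
`ℤ`-periodic subset of `ℝ`. -/
def Per (f : HomeoZR) : Set ℝ :=
  {x | ∃ n : ℕ, 0 < n ∧ ∃ m : ℤ, f.toFun^[n] x = x + m}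

/-- The fixed points of the underlying circle homeomorphism, as a subset of `ℝ`. -/
def FixS (f : HomeoZR) : Set ℝ :=
  {x | ∃ m : ℤ, f.toFun x = x + m}

/-- `q(f)`: the minimal period of the underlying circle homeomorphism. -/
noncomputable def q (f : HomeoZR) : ℕ :=
  sInf {n : ℕ | 0 < n ∧ ∃ x : ℝ, ∃ m : ℤ, f.toFun^[n] x = x + m}

/-- `p(f)`: the least `p ≥ 0` with `rot(f) = p / q(f)` mod `ℤ`. -/
noncomputable def p (f : HomeoZR) : ℕ :=
  sInf {p : ℕ | ∃ m : ℤ, f.transNum = (p : ℝ) / (f.q : ℝ) + (m : ℝ)}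

/-- Natural powers. -/
protected def npow (f : HomeoZR) : ℕ → HomeoZR
  | 0 => HomeoZR.id
  | n + 1 => (f.npow n).comp f

/-- Integer powers. -/
protected def zpow (f : HomeoZR) (k : ℤ) : HomeoZR :=
  if 0 ≤ k then f.npow k.toNat else f.symm.npow (-k).toNat

end HomeoZR

/-- `f` has rational rotation number. -/
def RatRot (f : HomeoZR) : Prop := ∃ r : ℚ, f.transNum = (r : ℝ)

/-- `F` is a positive one-parameter family (one-parameter group) commuting with `f`:
for `t ≠ 0` the fixed set of `F t` is the frontier of `Per f`, and for `t > 0` the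
canonical lift of `F t` moves every point off the frontier strictly to the right. -/
def PosFamily (f : HomeoZR) (F : ℝ → HomeoZR) : Prop :=
  (∀ s t, (F (s + t)).toFun = (F s).toFun ∘ (F t).toFun) ∧
  (∀ t, (F t).toFun ∘ f.toFun = f.toFun ∘ (F t).toFun) ∧
  (∀ t, t ≠ 0 → (F t).FixS = frontier f.Per) ∧
  (∀ t, 0 < t → ∀ x, x ∉ frontier f.Per → x < (F t).canon x)

/-- `δ_{f,g}(x,t)`, where `F` is a positive one-parameter family commuting with `f`. -/
noncomputable def delta (F : ℝ → HomeoZR) (g : HomeoZR) (x t : ℝ) : ℝ :=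
  ((F t).canon ∘ g.canon)^[g.q] x - x - (g.p : ℝ)

/-- Persistent periodic points. -/
def Pset (F : ℝ → HomeoZR) (g : HomeoZR) : Set ℝ := {x | ∀ t, delta F g x t = 0}

/-- Never-periodic points. -/
def Nset (F : ℝ → HomeoZR) (g : HomeoZR) : Set ℝ := {x | ∀ t, delta F g x t ≠ 0}

/-- Points periodic at a unique time. -/
def Uset (F : ℝ → HomeoZR) (g : HomeoZR) : Set ℝ := {x | ∃! t, delta F g x t = 0}

/-- `x` has a finite orbit in the circle under the group generated by `f` and `g`. -/
def FiniteOrbit (f g : HomeoZR) (x : ℝ) : Prop :=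
  ∃ S : Set ℝ, S.Finite ∧ x ∈ S ∧
    (∀ y ∈ S, ∃ z ∈ S, ∃ m : ℤ, f.toFun y = z + m) ∧
    (∀ y ∈ S, ∃ z ∈ S, ∃ m : ℤ, g.toFun y = z + m)

/-- `τ(f_1, …, f_n) = rot̃(f_n ∘ ⋯ ∘ f_1) − Σ rot̃(f_i)`. -/
noncomputable def tau (L : List HomeoZR) : ℝ :=
  (L.foldl (fun h u => u.comp h) HomeoZR.id).transNum
    - (L.map HomeoZR.transNum).sum


namespace HomeoZR

/-! ### Basic lemmas -/

lemma comp_toFun' (f g : HomeoZR) : (f.comp g).toFun = f.toFun ∘ g.toFun := rfl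

lemma id_toFun' : (HomeoZR.id).toFun = _root_.id := rfl

lemma toLift_coe (f : HomeoZR) : ⇑f.toLift = f.toFun := rfl

lemma continuous_toFun (f : HomeoZR) : Continuous f.toFun := by
  have hs : Function.Surjective f.toFun := f.right_inv.surjective
  have := (StrictMono.orderIsoOfSurjective f.toFun f.strictMono hs).continuous
  rwa [StrictMono.coe_orderIsoOfSurjective] at this

lemma map_add_int (f : HomeoZR) (x : ℝ) (m : ℤ) : f.toFun (x + m) = f.toFun x + m :=
  f.toLift.map_add_int x m

lemma npow_toFun (f : HomeoZR) (n : ℕ) : (f.npow n).toFun = f.toFun^[n] := by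
  induction n with
  | zero => rfl
  | succ n ih =>
    show ((f.npow n).comp f).toFun = _
    rw [comp_toFun', ih, ← Function.iterate_succ]

lemma iterate_map_add_int (f : HomeoZR) (n : ℕ) (x : ℝ) (m : ℤ) :
    f.toFun^[n] (x + m) = f.toFun^[n] x + m := by
  rw [← npow_toFun]; exact map_add_int _ x m

lemma toLift_npow (f : HomeoZR) (n : ℕ) : (f.npow n).toLift = f.toLift ^ n := by
  apply DFunLike.ext
  intro x
  rw [toLift_coe, npow_toFun, CircleDeg1Lift.coe_pow, toLift_coe]

lemma transNum_npow (f : HomeoZR) (n : ℕ) : (f.npow n).transNum = n * f.transNum := by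
  unfold transNum
  rw [toLift_npow, CircleDeg1Lift.translationNumber_pow]

lemma toLift_id : (HomeoZR.id).toLift = 1 := by
  apply DFunLike.ext; intro x; rfl

lemma transNum_id : (HomeoZR.id).transNum = 0 := by
  unfold transNum; rw [toLift_id, CircleDeg1Lift.translationNumber_one]

lemma symm_toFun (f : HomeoZR) : f.symm.toFun = f.invFun := rfl

lemma toLift_symm_mul (f : HomeoZR) : f.symm.toLift * f.toLift = 1 := by
  apply DFunLike.ext; intro x; exact f.left_inv x

lemma toLift_mul_symm (f : HomeoZR) : f.toLift * f.symm.toLift = 1 := by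
  apply DFunLike.ext; intro x; exact f.right_inv x

lemma transNum_symm (f : HomeoZR) : f.symm.transNum = - f.transNum := by
  have hc : Commute f.symm.toLift f.toLift := by
    unfold Commute SemiconjBy
    rw [toLift_symm_mul, toLift_mul_symm]
  have h := CircleDeg1Lift.translationNumber_mul_of_commute hc
  rw [toLift_symm_mul, CircleDeg1Lift.translationNumber_one] at h
  unfold transNum
  linarith [h]

lemma zpow_toFun_nonneg (f : HomeoZR) {k : ℤ} (hk : 0 ≤ k) :
    (f.zpow k).toFun = f.toFun^[k.toNat] := by
  unfold HomeoZR.zpow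
  rw [if_pos hk, npow_toFun]

lemma zpow_toFun_neg (f : HomeoZR) {k : ℤ} (hk : ¬ 0 ≤ k) :
    (f.zpow k).toFun = f.symm.toFun^[(-k).toNat] := by
  unfold HomeoZR.zpow
  rw [if_neg hk, npow_toFun]

lemma transNum_zpow (f : HomeoZR) (k : ℤ) : (f.zpow k).transNum = k * f.transNum := by
  unfold HomeoZR.zpow
  by_cases hk : 0 ≤ k
  · rw [if_pos hk, transNum_npow]
    congr 1
    exact_mod_cast congrArg (fun z : ℤ => (z : ℝ)) (Int.toNat_of_nonneg hk)
  · rw [if_neg hk, transNum_npow, transNum_symm]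
    have h1 : (((-k).toNat : ℤ) : ℝ) = ((-k : ℤ) : ℝ) := by
      exact_mod_cast congrArg (fun z : ℤ => (z : ℝ)) (Int.toNat_of_nonneg (by omega))
    push_cast at h1 ⊢
    rw [h1]; ring

lemma zpow_zero' (f : HomeoZR) : f.zpow 0 = HomeoZR.id := by
  unfold HomeoZR.zpow
  rw [if_pos le_rfl]
  rfl

/-! ### Integer translations -/

/-- Translation by an integer. -/
def trH (k : ℤ) : HomeoZR where
  toFun := fun x => x + k
  invFun := fun x => x - k
  left_inv := fun x => add_sub_cancel_right x k
  right_inv := fun x => by show (x - (k:ℝ)) + k = x; ring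
  strictMono := fun a b h => by simpa using h
  map_add_one := fun x => by ring

lemma trH_toFun (k : ℤ) (x : ℝ) : (trH k).toFun x = x + k := rfl

lemma transNum_trH (k : ℤ) : (trH k).transNum = k := by
  unfold transNum
  exact CircleDeg1Lift.translationNumber_of_eq_add_int _ (show (trH k).toLift 0 = 0 + k by
    rw [toLift_coe, trH_toFun])

/-- Translation number of a homeo which is a pointwise integer shift of another. -/
lemma transNum_eq_add_int {h h' : HomeoZR} {k : ℤ} (H : ∀ x, h.toFun x = h'.toFun x + k) :
    h.transNum = h'.transNum + k := by
  have hl : h.toLift = (trH k).toLift * h'.toLift := by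
    apply DFunLike.ext; intro x
    show h.toFun x = (trH k).toFun (h'.toFun x)
    rw [trH_toFun, H]
  have hc : Commute ((trH k).toLift) h'.toLift := by
    unfold Commute SemiconjBy
    apply DFunLike.ext; intro x
    show (trH k).toFun (h'.toFun x) = h'.toFun ((trH k).toFun x)
    rw [trH_toFun, trH_toFun, map_add_int]
  unfold transNum
  rw [hl, CircleDeg1Lift.translationNumber_mul_of_commute hc]
  have := transNum_trH k
  unfold transNum at this
  rw [this]; ring

/-! ### The Poincaré package: rational rotation number gives periodic points -/

lemma package (f : HomeoZR) (hf : RatRot f) :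
    ∃ P : ℤ, 0 < f.q ∧ ((f.q : ℝ) * f.transNum = P) ∧
      (f.Per = {x | f.toFun^[f.q] x = x + P}) ∧ f.Per.Nonempty := by
  obtain ⟨r, hr⟩ := hf
  have hcont : Continuous ⇑f.toLift := f.continuous_toFun
  have hden : f.toLift.translationNumber = (r.num : ℝ) / (r.den : ℝ) := by
    have : f.transNum = (r : ℝ) := hr
    unfold transNum at this
    rw [this, Rat.cast_def]
  obtain ⟨x, hx⟩ := (f.toLift.translationNumber_eq_rat_iff hcont r.pos).mp hden
  rw [CircleDeg1Lift.coe_pow] at hx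
  have hxiter : f.toFun^[r.den] x = x + r.num := hx
  have hSne : {n : ℕ | 0 < n ∧ ∃ x : ℝ, ∃ m : ℤ, f.toFun^[n] x = x + m}.Nonempty :=
    ⟨r.den, r.pos, x, r.num, hxiter⟩
  have hqmem := Nat.sInf_mem hSne
  obtain ⟨hqpos, x₁, P, hx₁⟩ := hqmem
  -- `hx₁ : f.toFun^[f.q] x₁ = x₁ + P`
  have hPq : (f.npow f.q).transNum = P := by
    unfold transNum
    apply CircleDeg1Lift.translationNumber_of_eq_add_int
    rw [toLift_coe, npow_toFun]
    exact hx₁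
  have hP : (f.q : ℝ) * f.transNum = P := by
    rw [← transNum_npow, hPq]
  refine ⟨P, hqpos, hP, ?_, ⟨x₁, f.q, hqpos, P, hx₁⟩⟩
  ext y
  constructor
  · rintro ⟨n, hn, m, hy⟩
    -- n * transNum = m
    have hm : (n : ℝ) * f.transNum = m := by
      rw [← transNum_npow]
      unfold transNum
      apply CircleDeg1Lift.translationNumber_of_eq_add_int
      rw [toLift_coe, npow_toFun]
      exact hy
    have hqm : (f.q : ℤ) * m = (n : ℤ) * P := by
      have : ((f.q : ℤ) * m : ℝ) = ((n : ℤ) * P : ℝ) := by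
        push_cast
        rw [← hm, ← hP]; ring
      exact_mod_cast this
    -- iterates of f^[n] on y
    have hiter : ∀ j : ℕ, f.toFun^[n * j] y = y + ((j : ℤ) * m : ℤ) := by
      intro j
      induction j with
      | zero => simp
      | succ j ih =>
        have : n * (j + 1) = n * j + n := by ring
        rw [this, Function.iterate_add_apply, hy,
          iterate_map_add_int, ih]
        push_cast; ring
    -- trichotomy for h := f^[q]
    set h := f.toFun^[f.q] with hh
    have hmono : StrictMono h := f.strictMono.iterate f.q
    have hkey : h^[n] y = y + (((n : ℤ) * P : ℤ) : ℝ) := by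
      have h1 : h^[n] y = f.toFun^[n * f.q] y := by
        rw [hh, ← Function.iterate_mul, mul_comm]
      rw [h1, hiter f.q, hqm]
    show h y = y + (P : ℝ)
    rcases lt_trichotomy (h y) (y + (P : ℝ)) with hlt | heq | hgt
    · exfalso
      have hb : ∀ j : ℕ, 1 ≤ j → h^[j] y < y + (((j : ℤ) * P : ℤ) : ℝ) := by
        intro j hj
        induction j, hj using Nat.le_induction with
        | base => simpa using hlt
        | succ j hj ih =>
          have h2 : h^[j + 1] y = h (h^[j] y) := Function.iterate_succ_apply' h j y
          have h3 : h (h^[j] y) < h (y + (((j : ℤ) * P : ℤ) : ℝ)) := hmono ih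
          have h4 : h (y + (((j : ℤ) * P : ℤ) : ℝ)) = h y + (((j : ℤ) * P : ℤ) : ℝ) :=
            f.iterate_map_add_int f.q y _
          have h5 : h y + (((j : ℤ) * P : ℤ) : ℝ) < y + (P : ℝ) + (((j : ℤ) * P : ℤ) : ℝ) := by
            linarith
          rw [h2]
          calc h (h^[j] y) < y + (P : ℝ) + (((j : ℤ) * P : ℤ) : ℝ) := by linarith
            _ = y + ((((j : ℕ) + 1 : ℤ) * P : ℤ) : ℝ) := by push_cast; ring
      have := hb n hn
      rw [hkey] at this
      exact lt_irrefl _ this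
    · exact heq
    · exfalso
      have hb : ∀ j : ℕ, 1 ≤ j → y + (((j : ℤ) * P : ℤ) : ℝ) < h^[j] y := by
        intro j hj
        induction j, hj using Nat.le_induction with
        | base => simpa using hgt
        | succ j hj ih =>
          have h2 : h^[j + 1] y = h (h^[j] y) := Function.iterate_succ_apply' h j y
          have h3 : h (y + (((j : ℤ) * P : ℤ) : ℝ)) < h (h^[j] y) := hmono ih
          have h4 : h (y + (((j : ℤ) * P : ℤ) : ℝ)) = h y + (((j : ℤ) * P : ℤ) : ℝ) :=
            f.iterate_map_add_int f.q y _
          calc y + ((((j : ℕ) + 1 : ℤ) * P : ℤ) : ℝ) = y + (P : ℝ) + (((j : ℤ) * P : ℤ) : ℝ) := by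
                push_cast; ring
            _ < h y + (((j : ℤ) * P : ℤ) : ℝ) := by linarith
            _ = h (y + (((j : ℤ) * P : ℤ) : ℝ)) := h4.symm
            _ < h (h^[j] y) := h3
            _ = h^[j + 1] y := h2.symm
      have := hb n hn
      rw [hkey] at this
      exact lt_irrefl _ this
  · rintro hy
    exact ⟨f.q, hqpos, P, hy⟩

end HomeoZR

namespace HomeoZR

/-! ### Escape lemma -/

lemma escape_aux (Φ : HomeoZR) {a b z s : ℝ}
    (hgap : ∀ y, a < y → y < b → Φ.toFun y ≠ y)
    (haz : a < z) (hzs : z ≤ s) (hsb : s < b) (hz : z < Φ.toFun z) :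
    ∃ n : ℕ, s < Φ.toFun^[n] z := by
  by_contra hcon
  push_neg at hcon
  set u : ℕ → ℝ := fun n => Φ.toFun^[n] z with hu
  have humono : Monotone u := by
    apply monotone_nat_of_le_succ
    intro n
    show Φ.toFun^[n] z ≤ Φ.toFun^[n + 1] z
    rw [Function.iterate_succ_apply]
    exact (Φ.strictMono.iterate n).monotone hz.le
  have hbdd : BddAbove (Set.range u) := ⟨s, by rintro _ ⟨n, rfl⟩; exact hcon n⟩
  set L := ⨆ n, u n with hL
  have htend : Filter.Tendsto u Filter.atTop (nhds L) := tendsto_atTop_ciSup humono hbdd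
  have htend2 : Filter.Tendsto (fun n => u (n + 1)) Filter.atTop (nhds L) :=
    htend.comp (Filter.tendsto_add_atTop_nat 1)
  have htend3 : Filter.Tendsto (fun n => Φ.toFun (u n)) Filter.atTop (nhds (Φ.toFun L)) :=
    (Φ.continuous_toFun.tendsto L).comp htend
  have hfix : Φ.toFun L = L := by
    apply tendsto_nhds_unique htend3
    have : (fun n => Φ.toFun (u n)) = fun n => u (n + 1) := by
      funext n
      simp [hu, Function.iterate_succ_apply']
    rw [this]
    exact htend2
  have hzL : z ≤ L := le_ciSup hbdd 0
  have hLs : L ≤ s := ciSup_le hcon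
  exact hgap L (lt_of_lt_of_le haz hzL) (lt_of_le_of_lt hLs hsb) hfix

lemma escape (Φ : HomeoZR) {a b z s : ℝ}
    (hgap : ∀ y, a < y → y < b → Φ.toFun y ≠ y)
    (haz : a < z) (hzs : z ≤ s) (hsb : s < b) :
    ∃ n : ℕ, s < Φ.toFun^[n] z ∨ s < Φ.symm.toFun^[n] z := by
  rcases lt_trichotomy (Φ.toFun z) z with hlt | heq | hgt
  · have hgap' : ∀ y, a < y → y < b → Φ.symm.toFun y ≠ y := by
      intro y hy1 hy2 hy3
      apply hgap y hy1 hy2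
      conv_lhs => rw [← hy3]
      exact Φ.right_inv y
    have hz' : z < Φ.symm.toFun z := by
      have := Φ.symm.strictMono hlt
      rwa [symm_toFun, Φ.left_inv] at this
    obtain ⟨n, hn⟩ := escape_aux Φ.symm hgap' haz hzs hsb hz'
    exact ⟨n, Or.inr hn⟩
  · exact absurd heq (hgap z haz (lt_of_le_of_lt hzs hsb))
  · obtain ⟨n, hn⟩ := escape_aux Φ hgap haz hzs hsb hgt
    exact ⟨n, Or.inl hn⟩

/-! ### The sup of a suitable invariant set is a fixed point -/

lemma sup_mem_fix (Φ : HomeoZR) {E : Set ℝ}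
    (hfix : ∀ y, Φ.toFun y = y ↔ y ∈ E)
    (hcl : IsClosed E) (hZ : ∀ y ∈ E, ∀ k : ℤ, y + (k : ℝ) ∈ E) (hne : E.Nonempty)
    {S : Set ℝ} (hSne : S.Nonempty) (hSb : BddAbove S)
    (hstep : ∀ z ∈ S, ∀ n : ℕ, Φ.toFun^[n] z ∈ S ∧ Φ.symm.toFun^[n] z ∈ S) :
    sSup S ∈ E := by
  set s := sSup S with hs
  by_contra hsE
  obtain ⟨y₀, hy₀⟩ := hne
  -- the gap around s
  have hEane : (E ∩ Set.Iic s).Nonempty := by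
    refine ⟨y₀ + (⌊s - y₀⌋ : ℝ), hZ y₀ hy₀ _, ?_⟩
    have := Int.floor_le (s - y₀)
    simp only [Set.mem_Iic]; linarith
  have hEabd : BddAbove (E ∩ Set.Iic s) := ⟨s, fun y hy => hy.2⟩
  set a := sSup (E ∩ Set.Iic s) with ha
  have haMem : a ∈ E ∩ Set.Iic s := (hcl.inter isClosed_Iic).csSup_mem hEane hEabd
  have has : a < s := lt_of_le_of_ne haMem.2 (fun h => hsE (h ▸ haMem.1))
  have hEbne : (E ∩ Set.Ici s).Nonempty := by
    refine ⟨y₀ + (⌈s - y₀⌉ : ℝ), hZ y₀ hy₀ _, ?_⟩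
    have := Int.le_ceil (s - y₀)
    simp only [Set.mem_Ici]; linarith
  have hEbbd : BddBelow (E ∩ Set.Ici s) := ⟨s, fun y hy => hy.2⟩
  set b := sInf (E ∩ Set.Ici s) with hb
  have hbMem : b ∈ E ∩ Set.Ici s := (hcl.inter isClosed_Ici).csInf_mem hEbne hEbbd
  have hsb : s < b := lt_of_le_of_ne hbMem.2 (fun h => hsE (by rw [h]; exact hbMem.1))
  have hgap : ∀ y, a < y → y < b → Φ.toFun y ≠ y := by
    intro y h1 h2 h3
    have hyE : y ∈ E := (hfix y).mp h3
    rcases le_or_gt y s with h4 | h4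
    · exact absurd (le_csSup hEabd ⟨hyE, h4⟩) (not_le.mpr h1)
    · exact absurd (csInf_le hEbbd ⟨hyE, h4.le⟩) (not_le.mpr h2)
  obtain ⟨z, hzS, haz⟩ := exists_lt_of_lt_csSup hSne has
  have hzs : z ≤ s := le_csSup hSb hzS
  obtain ⟨n, hn⟩ := escape Φ hgap haz hzs hsb
  rcases hn with hn | hn
  · exact absurd (le_csSup hSb ((hstep z hzS n).1)) (not_le.mpr hn)
  · exact absurd (le_csSup hSb ((hstep z hzS n).2)) (not_le.mpr hn)

/-! ### Words -/

/-- Composite of a list of homeomorphisms (first element applied first). -/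
def listComp (L : List HomeoZR) : HomeoZR := L.foldl (fun h u => u.comp h) HomeoZR.id

lemma listComp_from (a : HomeoZR) (L : List HomeoZR) :
    (L.foldl (fun h u => u.comp h) a).toFun = (listComp L).toFun ∘ a.toFun := by
  induction L generalizing a with
  | nil => rfl
  | cons h t ih =>
    show (t.foldl (fun h u => u.comp h) (h.comp a)).toFun = _
    rw [ih (h.comp a)]
    show (listComp t).toFun ∘ (h.toFun ∘ a.toFun) = (listComp (h :: t)).toFun ∘ a.toFun
    have : (listComp (h :: t)).toFun = (listComp t).toFun ∘ h.toFun := by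
      show (t.foldl (fun h u => u.comp h) (h.comp HomeoZR.id)).toFun = _
      rw [ih (h.comp HomeoZR.id)]
      rfl
    rw [this]
    rfl

lemma listComp_cons (h : HomeoZR) (t : List HomeoZR) :
    (listComp (h :: t)).toFun = (listComp t).toFun ∘ h.toFun := by
  show (t.foldl (fun h u => u.comp h) (h.comp HomeoZR.id)).toFun = _
  rw [listComp_from (h.comp HomeoZR.id)]
  rfl

lemma listComp_nil : (listComp []).toFun = _root_.id := rfl

lemma listComp_append (L₁ L₂ : List HomeoZR) :
    (listComp (L₁ ++ L₂)).toFun = (listComp L₂).toFun ∘ (listComp L₁).toFun := by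
  unfold listComp
  rw [List.foldl_append]
  exact listComp_from _ L₂

lemma listComp_replicate (n : ℕ) (h : HomeoZR) :
    (listComp (List.replicate n h)).toFun = h.toFun^[n] := by
  induction n with
  | zero => rfl
  | succ n ih =>
    rw [List.replicate_succ, listComp_cons, ih, ← Function.iterate_succ]

end HomeoZR

namespace HomeoZR

/-! ### Blocks and normalized letters -/

/-- The two-letter block `f^{n q(f)}, g^{m q(g)}`. -/
noncomputable def blockL (f g : HomeoZR) (p : ℤ × ℤ) : List HomeoZR :=
  [f.zpow (p.1 * (f.q : ℤ)), g.zpow (p.2 * (g.q : ℤ))]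

/-- The normalized letter: the block composite, translated back by its translation number. -/
noncomputable def lam (f g : HomeoZR) (P P' : ℤ) (p : ℤ × ℤ) : HomeoZR :=
  (trH (-(p.1 * P + p.2 * P'))).comp
    ((g.zpow (p.2 * (g.q : ℤ))).comp (f.zpow (p.1 * (f.q : ℤ))))

lemma lam_toFun (f g : HomeoZR) (P P' : ℤ) (p : ℤ × ℤ) (x : ℝ) :
    (lam f g P P' p).toFun x
      = (g.zpow (p.2 * (g.q : ℤ))).toFun ((f.zpow (p.1 * (f.q : ℤ))).toFun x)
        + ((-(p.1 * P + p.2 * P') : ℤ) : ℝ) := rfl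

lemma blockL_comp (f g : HomeoZR) (p : ℤ × ℤ) (x : ℝ) :
    (listComp (blockL f g p)).toFun x
      = (g.zpow (p.2 * (g.q : ℤ))).toFun ((f.zpow (p.1 * (f.q : ℤ))).toFun x) := rfl

lemma lam_fst_toFun (f g : HomeoZR) (P P' : ℤ) (n : ℤ) (x : ℝ) :
    (lam f g P P' (n, 0)).toFun x
      = (f.zpow (n * (f.q : ℤ))).toFun x + ((-(n * P) : ℤ) : ℝ) := by
  rw [lam_toFun]
  norm_num [zero_mul, zpow_zero', id_toFun']

lemma lam_snd_toFun (f g : HomeoZR) (P P' : ℤ) (m : ℤ) (x : ℝ) :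
    (lam f g P P' (0, m)).toFun x
      = (g.zpow (m * (g.q : ℤ))).toFun x + ((-(m * P') : ℤ) : ℝ) := by
  rw [lam_toFun]
  norm_num [zero_mul, zpow_zero', id_toFun']

/-- The composite of the blocks is the composite of the normalized letters shifted by the
total integer translation. -/
lemma bigComp_eq (f g : HomeoZR) (P P' : ℤ) (L : List (ℤ × ℤ)) (x : ℝ) :
    (listComp ((L.map (blockL f g)).flatten)).toFun x
      = (listComp (L.map (lam f g P P'))).toFun x
        + (((L.map (fun p => p.1 * P + p.2 * P')).sum : ℤ) : ℝ) := by
  induction L generalizing x with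
  | nil => simp [listComp_nil]
  | cons p t ih =>
    rw [List.map_cons, List.flatten_cons, listComp_append, Function.comp_apply, ih]
    rw [List.map_cons, listComp_cons, Function.comp_apply]
    have h1 : (listComp (blockL f g p)).toFun x
        = (lam f g P P' p).toFun x + ((p.1 * P + p.2 * P' : ℤ) : ℝ) := by
      rw [lam_toFun, blockL_comp]
      push_cast
      ring
    rw [h1]
    have h2 := map_add_int (listComp (t.map (lam f g P P')))
      ((lam f g P P' p).toFun x) (p.1 * P + p.2 * P')
    rw [h2, List.map_cons, List.sum_cons]
    push_cast
    ring

/-- Sum of the translation numbers of the letters in the blocks. -/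
lemma bigSum_eq (f g : HomeoZR) (P P' : ℤ)
    (hP : (f.q : ℝ) * f.transNum = P) (hP' : (g.q : ℝ) * g.transNum = P')
    (L : List (ℤ × ℤ)) :
    (((L.map (blockL f g)).flatten).map transNum).sum
      = (((L.map (fun p => p.1 * P + p.2 * P')).sum : ℤ) : ℝ) := by
  induction L with
  | nil => simp
  | cons p t ih =>
    rw [List.map_cons, List.flatten_cons, List.map_append, List.sum_append, ih,
      List.map_cons, List.sum_cons]
    have ha : (f.zpow (p.1 * (f.q : ℤ))).transNum = (p.1 : ℝ) * P := by
      rw [transNum_zpow, ← hP]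
      push_cast
      ring
    have hb : (g.zpow (p.2 * (g.q : ℤ))).transNum = (p.2 : ℝ) * P' := by
      rw [transNum_zpow, ← hP']
      push_cast
      ring
    show (f.zpow (p.1 * (f.q : ℤ))).transNum + ((g.zpow (p.2 * (g.q : ℤ))).transNum + 0) + _ = _
    rw [ha, hb]
    push_cast
    ring

end HomeoZR

/-- hard direction of Lemma 2.19. If `Per f ∩ Per g = ∅` then some
`τ(f^{n₁q(f)}, g^{m₁q(g)}, …, f^{n_ℓ q(f)}, g^{m_ℓ q(g)}) ≥ 1`. -/
theorem tau_ge_one_of_disjoint_Per (f g : HomeoZR)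
    (hf : RatRot f) (hg : RatRot g)
    (hdisj : f.Per ∩ g.Per = ∅) :
    ∃ ℓ : ℕ, 1 ≤ ℓ ∧ ∃ nn mm : Fin ℓ → ℤ,
      1 ≤ tau ((List.ofFn fun i : Fin ℓ =>
        [f.zpow (nn i * (f.q : ℤ)), g.zpow (mm i * (g.q : ℤ))]).flatten) := by
  obtain ⟨P, hqf, hPf, hPerf, hnef⟩ := f.package hf
  obtain ⟨P', hqg, hPg, hPerg, hneg⟩ := g.package hg
  -- the four normalized letters, as functions
  have hΦ : ∀ x, (HomeoZR.lam f g P P' (1, 0)).toFun x = f.toFun^[f.q] x - (P : ℝ) := by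
    intro x
    rw [HomeoZR.lam_fst_toFun,
      HomeoZR.zpow_toFun_nonneg f (by positivity : (0:ℤ) ≤ 1 * (f.q : ℤ))]
    have h1 : ((1 * (f.q : ℤ)).toNat) = f.q := by simp
    rw [h1]; push_cast; ring
  have hΦm : ∀ x, (HomeoZR.lam f g P P' (-1, 0)).toFun x
      = f.symm.toFun^[f.q] x + (P : ℝ) := by
    intro x
    have hq : (0:ℤ) < (f.q : ℤ) := by exact_mod_cast hqf
    rw [HomeoZR.lam_fst_toFun, HomeoZR.zpow_toFun_neg f (by omega : ¬ (0:ℤ) ≤ -1 * (f.q : ℤ))]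
    have h1 : ((-(-1 * (f.q : ℤ))).toNat) = f.q := by simp
    rw [h1]; push_cast; ring
  have hΨ : ∀ x, (HomeoZR.lam f g P P' (0, 1)).toFun x = g.toFun^[g.q] x - (P' : ℝ) := by
    intro x
    rw [HomeoZR.lam_snd_toFun,
      HomeoZR.zpow_toFun_nonneg g (by positivity : (0:ℤ) ≤ 1 * (g.q : ℤ))]
    have h1 : ((1 * (g.q : ℤ)).toNat) = g.q := by simp
    rw [h1]; push_cast; ring
  have hΨm : ∀ x, (HomeoZR.lam f g P P' (0, -1)).toFun x
      = g.symm.toFun^[g.q] x + (P' : ℝ) := by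
    intro x
    have hq : (0:ℤ) < (g.q : ℤ) := by exact_mod_cast hqg
    rw [HomeoZR.lam_snd_toFun, HomeoZR.zpow_toFun_neg g (by omega : ¬ (0:ℤ) ≤ -1 * (g.q : ℤ))]
    have h1 : ((-(-1 * (g.q : ℤ))).toNat) = g.q := by simp
    rw [h1]; push_cast; ring
  have hΦsymm : (HomeoZR.lam f g P P' (1, 0)).symm.toFun
      = (HomeoZR.lam f g P P' (-1, 0)).toFun := by
    funext y
    apply (HomeoZR.lam f g P P' (1, 0)).strictMono.injective
    have hr : (HomeoZR.lam f g P P' (1, 0)).toFun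
        ((HomeoZR.lam f g P P' (1, 0)).symm.toFun y) = y :=
      (HomeoZR.lam f g P P' (1, 0)).right_inv y
    rw [hr, hΦ, hΦm, f.iterate_map_add_int f.q (f.symm.toFun^[f.q] y) P,
      HomeoZR.symm_toFun, (f.right_inv.iterate f.q) y]
    ring
  have hΨsymm : (HomeoZR.lam f g P P' (0, 1)).symm.toFun
      = (HomeoZR.lam f g P P' (0, -1)).toFun := by
    funext y
    apply (HomeoZR.lam f g P P' (0, 1)).strictMono.injective
    have hr : (HomeoZR.lam f g P P' (0, 1)).toFun
        ((HomeoZR.lam f g P P' (0, 1)).symm.toFun y) = y :=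
      (HomeoZR.lam f g P P' (0, 1)).right_inv y
    rw [hr, hΨ, hΨm, g.iterate_map_add_int g.q (g.symm.toFun^[g.q] y) P',
      HomeoZR.symm_toFun, (g.right_inv.iterate g.q) y]
    ring
  -- the fixed-point sets
  set E : Set ℝ := {x : ℝ | f.toFun^[f.q] x = x + (P : ℝ)} with hEdef
  set E' : Set ℝ := {x : ℝ | g.toFun^[g.q] x = x + (P' : ℝ)} with hE'def
  have hfixE : ∀ y, (HomeoZR.lam f g P P' (1, 0)).toFun y = y ↔ y ∈ E := by
    intro y
    rw [hΦ y]
    constructor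
    · intro h; show f.toFun^[f.q] y = y + (P : ℝ); linarith
    · intro h; have h2 : f.toFun^[f.q] y = y + (P : ℝ) := h; linarith
  have hfixE' : ∀ y, (HomeoZR.lam f g P P' (0, 1)).toFun y = y ↔ y ∈ E' := by
    intro y
    rw [hΨ y]
    constructor
    · intro h; show g.toFun^[g.q] y = y + (P' : ℝ); linarith
    · intro h; have h2 : g.toFun^[g.q] y = y + (P' : ℝ) := h; linarith
  have hclE : IsClosed E :=
    isClosed_eq ((f.continuous_toFun).iterate f.q) (continuous_id.add continuous_const)
  have hclE' : IsClosed E' :=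
    isClosed_eq ((g.continuous_toFun).iterate g.q) (continuous_id.add continuous_const)
  have hZE : ∀ y ∈ E, ∀ k : ℤ, y + (k : ℝ) ∈ E := by
    intro y hy k
    have h2 : f.toFun^[f.q] y = y + (P : ℝ) := hy
    show f.toFun^[f.q] (y + (k : ℝ)) = (y + (k : ℝ)) + (P : ℝ)
    rw [f.iterate_map_add_int f.q y k, h2]; ring
  have hZE' : ∀ y ∈ E', ∀ k : ℤ, y + (k : ℝ) ∈ E' := by
    intro y hy k
    have h2 : g.toFun^[g.q] y = y + (P' : ℝ) := hy
    show g.toFun^[g.q] (y + (k : ℝ)) = (y + (k : ℝ)) + (P' : ℝ)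
    rw [g.iterate_map_add_int g.q y k, h2]; ring
  have hneE : E.Nonempty := by rw [← hPerf]; exact hnef
  have hneE' : E'.Nonempty := by rw [← hPerg]; exact hneg
  -- the reachable set
  set S : Set ℝ := {z : ℝ | ∃ L : List (ℤ × ℤ),
    z ≤ (HomeoZR.listComp (L.map (HomeoZR.lam f g P P'))).toFun 0} with hSdef
  have hSne : S.Nonempty := ⟨0, [], le_of_eq rfl⟩
  have hstep1 : ∀ p : ℤ × ℤ, ∀ z ∈ S, ∀ n : ℕ,
      (HomeoZR.lam f g P P' p).toFun^[n] z ∈ S := by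
    intro p z hz n
    obtain ⟨L, hzL⟩ := hz
    refine ⟨L ++ List.replicate n p, ?_⟩
    rw [List.map_append, HomeoZR.listComp_append, Function.comp_apply,
      List.map_replicate, HomeoZR.listComp_replicate]
    exact ((HomeoZR.lam f g P P' p).strictMono.iterate n).monotone hzL
  have hstepF : ∀ z ∈ S, ∀ n : ℕ,
      (HomeoZR.lam f g P P' (1, 0)).toFun^[n] z ∈ S ∧
      (HomeoZR.lam f g P P' (1, 0)).symm.toFun^[n] z ∈ S := by
    intro z hz n
    refine ⟨hstep1 (1, 0) z hz n, ?_⟩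
    rw [hΦsymm]
    exact hstep1 (-1, 0) z hz n
  have hstepG : ∀ z ∈ S, ∀ n : ℕ,
      (HomeoZR.lam f g P P' (0, 1)).toFun^[n] z ∈ S ∧
      (HomeoZR.lam f g P P' (0, 1)).symm.toFun^[n] z ∈ S := by
    intro z hz n
    refine ⟨hstep1 (0, 1) z hz n, ?_⟩
    rw [hΨsymm]
    exact hstep1 (0, -1) z hz n
  -- main claim : some word moves 0 at least to 1
  have hbig : ∃ z ∈ S, (0 : ℝ) + 1 ≤ z := by
    by_contra hcon
    push_neg at hcon
    have hSb : BddAbove S := ⟨(0:ℝ) + 1, fun z hz => (hcon z hz).le⟩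
    have h1 : sSup S ∈ E :=
      HomeoZR.sup_mem_fix (HomeoZR.lam f g P P' (1, 0)) hfixE hclE hZE hneE hSne hSb hstepF
    have h2 : sSup S ∈ E' :=
      HomeoZR.sup_mem_fix (HomeoZR.lam f g P P' (0, 1)) hfixE' hclE' hZE' hneE' hSne hSb hstepG
    have hx : sSup S ∈ f.Per ∩ g.Per :=
      ⟨by rw [hPerf]; exact h1, by rw [hPerg]; exact h2⟩
    rw [hdisj] at hx
    exact hx
  obtain ⟨z, hzS, hz1⟩ := hbig
  obtain ⟨L, hzL⟩ := hzS
  set C : HomeoZR := HomeoZR.listComp (L.map (HomeoZR.lam f g P P')) with hCdef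
  have hC : (0 : ℝ) + 1 ≤ C.toFun 0 := le_trans hz1 hzL
  -- translation number of the normalized composite is at least 1
  have hτC : (1 : ℝ) ≤ C.transNum := by
    have hh : (0 : ℝ) + ((1 : ℤ) : ℝ) ≤ C.toLift 0 := by
      rw [HomeoZR.toLift_coe]; push_cast; exact hC
    have := CircleDeg1Lift.le_translationNumber_of_add_int_le C.toLift hh
    have h2 : ((1 : ℤ) : ℝ) ≤ C.transNum := this
    push_cast at h2
    exact h2
  have hlen : 0 < L.length := by
    rcases L with _ | ⟨p, t⟩
    · exfalso
      have : (0 : ℝ) + 1 ≤ (0 : ℝ) := hC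
      linarith
    · simp
  refine ⟨L.length, hlen, fun i => (L.get i).1, fun i => (L.get i).2, ?_⟩
  have hlist : (List.ofFn fun i : Fin L.length =>
      [f.zpow ((L.get i).1 * (f.q : ℤ)), g.zpow ((L.get i).2 * (g.q : ℤ))])
      = L.map (HomeoZR.blockL f g) := by
    have h0 : (fun i : Fin L.length =>
        [f.zpow ((L.get i).1 * (f.q : ℤ)), g.zpow ((L.get i).2 * (g.q : ℤ))])
        = (HomeoZR.blockL f g) ∘ L.get := rfl
    rw [h0, ← List.map_ofFn, List.ofFn_get]
  rw [hlist]
  have htau : tau ((L.map (HomeoZR.blockL f g)).flatten)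
      = (HomeoZR.listComp ((L.map (HomeoZR.blockL f g)).flatten)).transNum
        - (((L.map (HomeoZR.blockL f g)).flatten).map HomeoZR.transNum).sum := rfl
  rw [htau]
  have hKC : (HomeoZR.listComp ((L.map (HomeoZR.blockL f g)).flatten)).transNum
      = C.transNum + (((L.map (fun p => p.1 * P + p.2 * P')).sum : ℤ) : ℝ) :=
    HomeoZR.transNum_eq_add_int (fun x => HomeoZR.bigComp_eq f g P P' L x)
  have hKS := HomeoZR.bigSum_eq f g P P' hPf hPg L
  rw [hKC, hKS]
  linarith
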